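/- Let μ be a finite Borel measure on the product space (0, 1/2) × C([0,1], ℝ) such that for μ-almost every pair (t, ω) there exists δ₀ > 0 with ω(t+δ) > ω(t) for all δ ∈ (0, δ₀). For integers n ≥ 1 and δ ∈ (0, 1/2), define ψ_{n,δ} : (0,1/2) × C([0,1], ℝ) → [−1, 1] by ψ_{n,δ}(t, ω) = Σ_{k=1}^{n} 1_{[(k−1)/(2n), k/(2n))}(t) · sign( ω(k/(2n) + δ) − ω(k/(2n)) ). Then: (i) ∫ ψ_{n,δ} dμ ≤ μ(total) for all n, δ; and (ii) lim_{δ→0+} liminf_{n→∞} ∫ ψ_{n,δ} dμ = μ(total), where μ(total) is the total mass of μ. (This is the analytic core of Lemma 4.3: for every f in the first superchaos localized on (0, 1/2), the quantities ⟨𝓒_{ψ_{n,δ}}⟩_f = ∫ ψ_{n,δ} dμ_f converge to ‖f‖², because μ_f is carried by pairs (t, ω) where t is a strict local minimizer of the Brownian path ω.) -/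

import Mathlib

open MeasureTheory Filter
open scoped Topology

noncomputable instance : MeasurableSpace C(Set.Icc (0 : ℝ) 1, ℝ) := borel _
instance : BorelSpace C(Set.Icc (0 : ℝ) 1, ℝ) := ⟨rfl⟩

/-- Evaluation of a continuous function on `[0,1]` at a real point of `[0,1]`
(points are clamped into `[0,1]`; on `[0,1]` this is just evaluation). -/
noncomputable def ev (ω : C(Set.Icc (0 : ℝ) 1, ℝ)) (x : ℝ) : ℝ :=
  ω (Set.projIcc 0 1 zero_le_one x)

/-- `ψ_{n,δ}(t, ω) = Σ_{k=1}^{n} 1_{[(k-1)/(2n), k/(2n))}(t) ⋅ sign (ω(k/(2n) + δ) - ω(k/(2n)))`. -/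
noncomputable def psi (n : ℕ) (δ : ℝ)
    (p : Set.Ioo (0 : ℝ) (1/2) × C(Set.Icc (0 : ℝ) 1, ℝ)) : ℝ :=
  ∑ k ∈ Finset.Icc 1 n,
    (Set.Ico (((k : ℝ) - 1) / (2 * n)) ((k : ℝ) / (2 * n))).indicator
        (fun _ => (1 : ℝ)) (p.1 : ℝ)
      * Real.sign (ev p.2 ((k : ℝ) / (2 * n) + δ) - ev p.2 ((k : ℝ) / (2 * n)))

/-! For `n ≥ 1` only one term of `ψ_{n,δ}(t, ω)` survives: the sign of the increment of `ω` over
`[s, s + δ]`, where `s` is the right end of the grid cell of mesh `1/(2n)` containing `t`. As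
`n → ∞` we have `s → t`, so by continuity of `ω` the sign is eventually `1` as soon as
`ω(t + δ) > ω(t)`, which holds for `δ < δ₀(t, ω)`. Hence `liminf_n ψ_{n,δ} = 1` eventually
as `δ → 0+`, `μ`-a.e.; by dominated convergence `∫ liminf_n ψ_{n,δ} dμ → μ(total)`, and
Fatou's lemma (the `ψ_{n,δ}` are bounded by `1`) squeezes `liminf_n ∫ ψ_{n,δ} dμ` between
this and `μ(total)`. -/

section BoundedLiminf

variable {ι : Type*} {F : Filter ι} {u : ι → ℝ} {C : ℝ}

lemma Filter.isBoundedUnder_ge_of_abs_le (h : ∀ i, |u i| ≤ C) :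
    F.IsBoundedUnder (· ≥ ·) u :=
  isBoundedUnder_of ⟨-C, fun i => (abs_le.1 (h i)).1⟩

variable [F.NeBot]

lemma Filter.isCoboundedUnder_ge_of_abs_le (h : ∀ i, |u i| ≤ C) :
    F.IsCoboundedUnder (· ≥ ·) u :=
  (isBoundedUnder_of ⟨C, fun i => (abs_le.1 (h i)).2⟩).isCoboundedUnder_ge

lemma Filter.abs_liminf_le (h : ∀ i, |u i| ≤ C) : |F.liminf u| ≤ C :=
  abs_le.2 ⟨le_liminf_of_le (isCoboundedUnder_ge_of_abs_le h)
      (.of_forall fun i => (abs_le.1 (h i)).1),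
    liminf_le_of_le (isBoundedUnder_ge_of_abs_le h)
      fun _ hb => let ⟨i, hi⟩ := hb.exists; hi.trans (abs_le.1 (h i)).2⟩

lemma Filter.liminf_add_const_of_abs_le (h : ∀ i, |u i| ≤ C) (c : ℝ) :
    F.liminf (fun i => u i + c) = F.liminf u + c :=
  liminf_add_const F u c (isCoboundedUnder_ge_of_abs_le h) (isBoundedUnder_ge_of_abs_le h)

lemma ENNReal.ofReal_liminf_of_abs_le (h : ∀ i, |u i| ≤ C) :
    ENNReal.ofReal (F.liminf u) = F.liminf fun i => ENNReal.ofReal (u i) :=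
  ENNReal.ofReal_mono.map_liminf_of_continuousAt u ENNReal.continuous_ofReal.continuousAt
    (isCoboundedUnder_ge_of_abs_le h) (isBoundedUnder_ge_of_abs_le h)

end BoundedLiminf

namespace MeasureTheory

variable {α : Type*} [MeasurableSpace α] {μ : Measure α} [IsFiniteMeasure μ]
  {f : ℕ → α → ℝ} {C : ℝ}

lemma abs_integral_le_of_abs_le {g : α → ℝ} (h : ∀ x, |g x| ≤ C) :
    |∫ x, g x ∂μ| ≤ C * μ.real Set.univ :=
  norm_integral_le_of_norm_le_const (f := g) (.of_forall h)

lemma integrable_liminf_of_abs_le (hf : ∀ n, Measurable (f n)) (hC : ∀ n x, |f n x| ≤ C) :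
    Integrable (fun x => liminf (f · x) atTop) μ :=
  .of_bound (Measurable.liminf hf).aestronglyMeasurable C
    (.of_forall fun x => abs_liminf_le (hC · x))

lemma integral_liminf_le_liminf_integral_of_nonneg (hf : ∀ n, Measurable (f n))
    (hC : ∀ n x, |f n x| ≤ C) (h0 : ∀ n x, 0 ≤ f n x) :
    ∫ x, liminf (f · x) atTop ∂μ ≤ liminf (fun n => ∫ x, f n x ∂μ) atTop := by
  have hfi : ∀ n, Integrable (f n) μ := fun n =>
    .of_bound (hf n).aestronglyMeasurable C (.of_forall (hC n))
  have hI : ∀ n, |∫ x, f n x ∂μ| ≤ C * μ.real Set.univ := fun n =>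
    abs_integral_le_of_abs_le (hC n)
  rw [← ENNReal.ofReal_le_ofReal_iff (le_liminf_of_le (isCoboundedUnder_ge_of_abs_le hI)
      (.of_forall fun n => integral_nonneg (h0 n))),
    ofReal_integral_eq_lintegral_ofReal (integrable_liminf_of_abs_le hf hC)
      (.of_forall fun x => le_liminf_of_le (isCoboundedUnder_ge_of_abs_le (hC · x))
        (.of_forall fun n => h0 n x)),
    ENNReal.ofReal_liminf_of_abs_le hI]
  calc ∫⁻ x, ENNReal.ofReal (liminf (f · x) atTop) ∂μ
      = ∫⁻ x, liminf (fun n => ENNReal.ofReal (f n x)) atTop ∂μ :=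
        lintegral_congr fun x => ENNReal.ofReal_liminf_of_abs_le (hC · x)
    _ ≤ liminf (fun n => ∫⁻ x, ENNReal.ofReal (f n x) ∂μ) atTop :=
        lintegral_liminf_le fun n => (hf n).ennreal_ofReal
    _ = liminf (fun n => ENNReal.ofReal (∫ x, f n x ∂μ)) atTop := by
        simp_rw [ofReal_integral_eq_lintegral_ofReal (hfi _) (.of_forall (h0 _))]

lemma integral_liminf_le_liminf_integral (hf : ∀ n, Measurable (f n))
    (hC : ∀ n x, |f n x| ≤ C) :
    ∫ x, liminf (f · x) atTop ∂μ ≤ liminf (fun n => ∫ x, f n x ∂μ) atTop := by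
  have hshift : ∀ n x, |f n x + C| ≤ 2 * C := fun n x => by
    obtain ⟨h₁, h₂⟩ := abs_le.1 (hC n x)
    exact abs_le.2 ⟨by linarith, by linarith⟩
  have hfi : ∀ n, Integrable (f n) μ := fun n =>
    .of_bound (hf n).aestronglyMeasurable C (.of_forall (hC n))
  have hI : ∀ n, |∫ x, f n x ∂μ| ≤ C * μ.real Set.univ := fun n =>
    abs_integral_le_of_abs_le (hC n)
  have key := integral_liminf_le_liminf_integral_of_nonneg (μ := μ)
    (fun n => (hf n).add_const C) hshift (fun n x => by linarith [(abs_le.1 (hC n x)).1])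
  simp_rw [liminf_add_const_of_abs_le (hC · _), integral_add (hfi _) (integrable_const C)] at key
  rw [integral_add (integrable_liminf_of_abs_le hf hC) (integrable_const C),
    liminf_add_const_of_abs_le hI] at key
  linarith

end MeasureTheory

lemma Real.measurable_sign : Measurable Real.sign :=
  Measurable.ite measurableSet_Iio measurable_const
    (Measurable.ite measurableSet_Ioi measurable_const measurable_const)

lemma Real.abs_sign_le_one (r : ℝ) : |Real.sign r| ≤ 1 := by
  rcases Real.sign_apply_eq r with h | h | h <;> simp [h]

lemma continuous_ev (ω : C(Set.Icc (0 : ℝ) 1, ℝ)) : Continuous (ev ω) :=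
  ω.continuous.comp continuous_projIcc

/-- The index `k` of the grid cell `[(k-1)/(2n), k/(2n))` containing `t ≥ 0`. -/
noncomputable def cellIndex (n : ℕ) (t : ℝ) : ℕ := ⌊2 * n * t⌋₊ + 1

section cellIndex

variable {n : ℕ} {t : ℝ}

lemma mem_Ico_iff_eq_cellIndex (hn : 1 ≤ n) (ht : 0 ≤ t) (k : ℕ) :
    t ∈ Set.Ico (((k : ℝ) - 1) / (2 * n)) ((k : ℝ) / (2 * n)) ↔ k = cellIndex n t := by
  have h2n : (0 : ℝ) < 2 * n := by positivity
  rw [Set.mem_Ico, div_le_iff₀ h2n, lt_div_iff₀ h2n]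
  rcases k with _ | k
  · refine iff_of_false (fun h => ?_) (by simp [cellIndex])
    exact (mul_nonneg ht h2n.le).not_gt (by exact_mod_cast h.2)
  · rw [cellIndex, Nat.add_right_cancel_iff, eq_comm, Nat.floor_eq_iff (by positivity)]
    push_cast
    constructor <;> rintro ⟨h₁, h₂⟩ <;> constructor <;> linarith

lemma cellIndex_mem_Icc (hn : 1 ≤ n) (ht : t ∈ Set.Ioo (0 : ℝ) (1/2)) :
    cellIndex n t ∈ Finset.Icc 1 n := by
  have : ⌊2 * n * t⌋₊ < n := by
    rw [Nat.floor_lt (by nlinarith [ht.1])]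
    nlinarith [ht.2, show (1 : ℝ) ≤ n by exact_mod_cast hn]
  simp only [Finset.mem_Icc, cellIndex]
  omega

lemma tendsto_cellIndex_div (ht : 0 ≤ t) :
    Tendsto (fun n : ℕ => (cellIndex n t : ℝ) / (2 * n)) atTop (𝓝 t) := by
  have h : Tendsto (fun x : ℝ => (⌊t * x⌋₊ : ℝ) / x + x⁻¹) atTop (𝓝 t) := by
    simpa using (tendsto_nat_floor_mul_div_atTop ht).add tendsto_inv_atTop_zero
  refine (h.comp (tendsto_natCast_atTop_atTop.const_mul_atTop two_pos)).congr fun n => ?_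
  simp [cellIndex, add_div, mul_comm t]

end cellIndex

lemma psi_eq_sign {n : ℕ} (hn : 1 ≤ n) (δ : ℝ)
    (p : Set.Ioo (0 : ℝ) (1/2) × C(Set.Icc (0 : ℝ) 1, ℝ)) :
    psi n δ p = Real.sign (ev p.2 (cellIndex n p.1 / (2 * n) + δ)
      - ev p.2 (cellIndex n p.1 / (2 * n))) := by
  simp only [psi, Set.indicator_apply, mem_Ico_iff_eq_cellIndex hn p.1.2.1.le, ite_mul,
    one_mul, zero_mul, Finset.sum_ite_eq', cellIndex_mem_Icc hn p.1.2, if_true]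

lemma abs_psi_le_one (n : ℕ) (δ : ℝ)
    (p : Set.Ioo (0 : ℝ) (1/2) × C(Set.Icc (0 : ℝ) 1, ℝ)) : |psi n δ p| ≤ 1 := by
  rcases Nat.eq_zero_or_pos n with rfl | hn
  · simp [psi]
  · rw [psi_eq_sign hn]
    exact Real.abs_sign_le_one _

lemma measurable_psi (n : ℕ) (δ : ℝ) : Measurable (psi n δ) := by
  have hev : ∀ x, Measurable fun p : Set.Ioo (0 : ℝ) (1/2) × C(Set.Icc (0 : ℝ) 1, ℝ) =>
      ev p.2 x := fun x => ((continuous_eval_const _).comp continuous_snd).measurable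
  refine Finset.measurable_sum _ fun k _ => Measurable.mul ?_ ?_
  · exact (measurable_const.indicator measurableSet_Ico).comp
      (measurable_subtype_coe.comp measurable_fst)
  · exact Real.measurable_sign.comp ((hev _).sub (hev _))

lemma tendsto_psi_of_lt {δ : ℝ} {p : Set.Ioo (0 : ℝ) (1/2) × C(Set.Icc (0 : ℝ) 1, ℝ)}
    (hp : ev p.2 p.1 < ev p.2 (p.1 + δ)) : Tendsto (fun n => psi n δ p) atTop (𝓝 1) := by
  have hc := tendsto_cellIndex_div p.1.2.1.le
  have hinc : Tendsto (fun n : ℕ => ev p.2 (cellIndex n p.1 / (2 * n) + δ)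
      - ev p.2 (cellIndex n p.1 / (2 * n))) atTop (𝓝 (ev p.2 (p.1 + δ) - ev p.2 p.1)) :=
    (((continuous_ev p.2).tendsto _).comp (hc.add_const δ)).sub
      (((continuous_ev p.2).tendsto _).comp hc)
  refine tendsto_const_nhds.congr' ?_
  filter_upwards [hinc.eventually (eventually_gt_nhds (sub_pos.2 hp)),
    eventually_ge_atTop 1] with n hpos hn
  rw [psi_eq_sign hn, Real.sign_of_pos hpos]

lemma tendsto_integral_liminf_psi
    {μ : Measure (Set.Ioo (0 : ℝ) (1/2) × C(Set.Icc (0 : ℝ) 1, ℝ))} [IsFiniteMeasure μ]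
    (hμ : ∀ᵐ p ∂μ, ∃ δ₀ > (0 : ℝ), ∀ δ ∈ Set.Ioo (0 : ℝ) δ₀,
      ev p.2 ((p.1 : ℝ) + δ) > ev p.2 (p.1 : ℝ)) :
    Tendsto (fun δ : ℝ => ∫ p, liminf (fun n : ℕ => psi n δ p) atTop ∂μ)
      (𝓝[>] 0) (𝓝 (μ.real Set.univ)) := by
  have h := tendsto_integral_filter_of_dominated_convergence (μ := μ) (l := 𝓝[>] (0 : ℝ))
    (f := fun _ => (1 : ℝ)) (fun _ => 1)
    (.of_forall fun δ => (Measurable.liminf (measurable_psi · δ)).aestronglyMeasurable)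
    (.of_forall fun δ => .of_forall fun p => abs_liminf_le (abs_psi_le_one · δ p))
    (integrable_const 1) ?_
  · simpa using h
  filter_upwards [hμ] with p ⟨δ₀, hδ₀, hp⟩
  refine tendsto_const_nhds.congr' ?_
  filter_upwards [Ioo_mem_nhdsGT hδ₀] with δ hδ
  exact (tendsto_psi_of_lt (hp δ hδ)).liminf_eq.symm

/-- Analytic core of Lemma 4.3: if a finite Borel measure `μ` on `(0,1/2) × C([0,1], ℝ)` is
carried by pairs `(t, ω)` such that `ω(t + δ) > ω(t)` for all small enough `δ > 0`, then
`∫ ψ_{n,δ} dμ ≤ μ(total)` for all `n ≥ 1`, `δ ∈ (0,1/2)`, and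
`liminf_{n→∞} ∫ ψ_{n,δ} dμ → μ(total)` as `δ → 0+`. -/
theorem liminf_integral_psi_tendsto_total_mass
    (μ : Measure (Set.Ioo (0 : ℝ) (1/2) × C(Set.Icc (0 : ℝ) 1, ℝ)))
    [IsFiniteMeasure μ]
    (hμ : ∀ᵐ p ∂μ, ∃ δ₀ > (0 : ℝ), ∀ δ ∈ Set.Ioo (0 : ℝ) δ₀,
      ev p.2 ((p.1 : ℝ) + δ) > ev p.2 (p.1 : ℝ)) :
    (∀ n : ℕ, 1 ≤ n → ∀ δ ∈ Set.Ioo (0 : ℝ) (1/2),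
      ∫ p, psi n δ p ∂μ ≤ (μ Set.univ).toReal) ∧
    Tendsto (fun δ : ℝ => liminf (fun n : ℕ => ∫ p, psi n δ p ∂μ) atTop)
      (𝓝[>] (0 : ℝ)) (𝓝 ((μ Set.univ).toReal)) := by
  have hbound : ∀ n δ, |∫ p, psi n δ p ∂μ| ≤ μ.real Set.univ := fun n δ => by
    simpa using abs_integral_le_of_abs_le (μ := μ) (abs_psi_le_one n δ)
  refine ⟨fun n _ δ _ => (abs_le.1 (hbound n δ)).2, ?_⟩
  exact tendsto_of_tendsto_of_tendsto_of_le_of_le (tendsto_integral_liminf_psi hμ)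
    tendsto_const_nhds
    (fun δ => integral_liminf_le_liminf_integral (measurable_psi · δ) (abs_psi_le_one · δ))
    (fun δ => (abs_le.1 (abs_liminf_le (hbound · δ))).2)
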